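/- Let D ∈ ℝ^{n×m}, and let S_T = [I_{n−1} 0] and S_B = [0 I_{n−1}] be the top and bottom (n−1)-row extraction operators. Let Γ = (α_1,…,α_P) with α_i ∈ ℝ^m, under cyclic indexing α_{P+1} = α_1. Then MΓ = 0 (with M as defined from the global convolutional dictionary D_G by M's i-th block row equal to Q_i − R_i D_G) if and only if S_B D α_i = S_T D α_{i+1} for every i = 1,…,P. -/

import Mathlib

open Matrix

noncomputable section

/-- Cyclic patch-extraction operator: extracts the `n` consecutive coordinates of a signal of
length `N` starting at position `i`, indices taken modulo `N`. -/
def Rop (N n : ℕ) (i : Fin N) : Matrix (Fin n) (Fin N) ℝ :=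
  Matrix.of fun k j => if (j : ℕ) = ((i : ℕ) + (k : ℕ)) % N then 1 else 0

/-- Global convolutional dictionary: horizontal concatenation of the blocks `(1/n) • Rᵢᵀ D`. -/
def DG (N n m : ℕ) (D : Matrix (Fin n) (Fin m) ℝ) : Matrix (Fin N) (Fin N × Fin m) ℝ :=
  Matrix.of fun x p => ((1 / (n : ℝ)) • ((Rop N n p.1)ᵀ * D)) x p.2

/-- `Qᵢ` places `D` in block position `i` and zeros elsewhere. -/
def Qop (N n m : ℕ) (D : Matrix (Fin n) (Fin m) ℝ) (i : Fin N) :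
    Matrix (Fin n) (Fin N × Fin m) ℝ :=
  Matrix.of fun k p => if p.1 = i then D k p.2 else 0

/-- Patch-agreement constraint matrix `M`: block rows `Qᵢ - Rᵢ D_G`. -/
def Mop (N n m : ℕ) (D : Matrix (Fin n) (Fin m) ℝ) :
    Matrix (Fin N × Fin n) (Fin N × Fin m) ℝ :=
  Matrix.of fun q p => (Qop N n m D q.1 - Rop N n q.1 * DG N n m D) q.2 p

/-- Bottom extraction operator `S_B = [0  I_{n-1}]`. -/
def SBop (n : ℕ) : Matrix (Fin (n - 1)) (Fin n) ℝ :=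
  Matrix.of fun r j => if (j : ℕ) = (r : ℕ) + 1 then 1 else 0

/-- Top extraction operator `S_T = [I_{n-1}  0]`. -/
def STop (n : ℕ) : Matrix (Fin (n - 1)) (Fin n) ℝ :=
  Matrix.of fun r j => if (j : ℕ) = (r : ℕ) then 1 else 0

/-- `ℓ₀` pseudo-norm: the number of nonzero entries. -/
def l0 {m : ℕ} (α : Fin m → ℝ) : ℕ := (Function.support α).ncard

/-- The support of a vector, as a `Finset`. -/
def suppF {m : ℕ} (α : Fin m → ℝ) : Finset (Fin m) :=
  (Set.toFinite (Function.support α)).toFinset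

/-- The spark of a dictionary: the minimal number of linearly dependent columns (`⊤` if the
columns are linearly independent). -/
def spark {n m : ℕ} (D : Matrix (Fin n) (Fin m) ℝ) : ℕ∞ :=
  sInf {j : ℕ∞ | ∃ s : Finset (Fin m), (s.card : ℕ∞) = j ∧
    (D.submatrix id (fun a : {a // a ∈ s} => (a : Fin m))).rank < s.card}

/-- The globalized spark relative to a family `T` of allowed supports. -/
def gspark {n m : ℕ} (D : Matrix (Fin n) (Fin m) ℝ) (T : Set (Finset (Fin m))) : ℕ∞ :=
  sInf {j : ℕ∞ | ∃ s₁ ∈ T, ∃ s₂ ∈ T, (((s₁ ∪ s₂).card : ℕ) : ℕ∞) = j ∧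
    (D.submatrix id (fun a : {a // a ∈ s₁ ∪ s₂} => (a : Fin m))).rank < (s₁ ∪ s₂).card}

/-!
Write `βᵢ = D αᵢ` for the `i`-th patch. Since `Qᵢ Γ = βᵢ`, `MΓ = 0` says that every patch is the
`i`-th patch `Rᵢ x` of the single signal `x = D_G Γ = (1/n) ∑ᵢ Rᵢᵀ βᵢ`. Conversely, if `βᵢ = Rᵢ x`
for some signal `x`, then `D_G Γ = x`, because every coordinate lies in exactly `n` cyclic patches;
so `MΓ = 0` iff the patches come from one signal. Patches of one signal agree on their overlaps,
and conversely overlap agreement carries entry `k` of patch `i` to entry `0` of patch `i + k`, so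
`x t = (β t) 0` is such a signal.
-/

open Fin.NatCast Fin.CommRing

section Patches

variable {N n : ℕ} [NeZero N]

theorem Rop_apply (i : Fin N) (k : Fin n) (j : Fin N) :
    Rop N n i k j = if j = i + ((k : ℕ) : Fin N) then 1 else 0 := by
  simp only [Rop, of_apply, Fin.ext_iff, Fin.val_add, Fin.val_natCast, Nat.add_mod_mod]

theorem Rop_mulVec_apply (x : Fin N → ℝ) (i : Fin N) (k : Fin n) :
    (Rop N n i *ᵥ x) k = x (i + ((k : ℕ) : Fin N)) := by
  simp [mulVec, dotProduct, Rop_apply]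

theorem Rop_transpose_mulVec_apply (v : Fin n → ℝ) (i t : Fin N) :
    ((Rop N n i)ᵀ *ᵥ v) t = ∑ k : Fin n, if t = i + ((k : ℕ) : Fin N) then v k else 0 := by
  simp [mulVec, dotProduct, Rop_apply]

theorem sum_Rop_transpose_mulVec_Rop_mulVec (x : Fin N → ℝ) :
    ∑ i, (Rop N n i)ᵀ *ᵥ (Rop N n i *ᵥ x) = (n : ℝ) • x := by
  ext t
  simp only [Finset.sum_apply, Rop_transpose_mulVec_apply, Rop_mulVec_apply]
  rw [Finset.sum_comm]
  simp_rw [eq_comm (a := t), ← eq_sub_iff_add_eq]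
  simp

end Patches

section Dictionary

variable {N n m : ℕ}

theorem Qop_mulVec (D : Matrix (Fin n) (Fin m) ℝ) (Γ : Fin N × Fin m → ℝ) (i : Fin N) :
    Qop N n m D i *ᵥ Γ = D *ᵥ Function.curry Γ i := by
  ext k
  simp [Qop, mulVec, dotProduct, Fintype.sum_prod_type, ite_mul]

theorem DG_mulVec (D : Matrix (Fin n) (Fin m) ℝ) (Γ : Fin N × Fin m → ℝ) :
    DG N n m D *ᵥ Γ = (1 / (n : ℝ)) • ∑ i, (Rop N n i)ᵀ *ᵥ (D *ᵥ Function.curry Γ i) := by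
  have : DG N n m D *ᵥ Γ = ∑ i, ((1 / (n : ℝ)) • ((Rop N n i)ᵀ * D)) *ᵥ Function.curry Γ i := by
    ext t
    simp [DG, mulVec, dotProduct, Fintype.sum_prod_type, Finset.sum_apply]
  simp only [this, smul_mulVec, mulVec_mulVec, Finset.smul_sum]

theorem Mop_mulVec_apply (D : Matrix (Fin n) (Fin m) ℝ) (Γ : Fin N × Fin m → ℝ) (i : Fin N)
    (k : Fin n) :
    (Mop N n m D *ᵥ Γ) (i, k) =
      (D *ᵥ Function.curry Γ i) k - (Rop N n i *ᵥ (DG N n m D *ᵥ Γ)) k := by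
  change ((Qop N n m D i - Rop N n i * DG N n m D) *ᵥ Γ) k = _
  rw [sub_mulVec, ← mulVec_mulVec, Qop_mulVec]
  rfl

theorem Mop_mulVec_eq_zero_iff (D : Matrix (Fin n) (Fin m) ℝ) (Γ : Fin N × Fin m → ℝ) :
    Mop N n m D *ᵥ Γ = 0 ↔ ∀ i, D *ᵥ Function.curry Γ i = Rop N n i *ᵥ (DG N n m D *ᵥ Γ) := by
  simp only [funext_iff, Prod.forall, Mop_mulVec_apply, Pi.zero_apply, sub_eq_zero]

theorem Mop_mulVec_eq_zero_iff_exists_signal [NeZero N] (hn : 0 < n)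
    (D : Matrix (Fin n) (Fin m) ℝ) (Γ : Fin N × Fin m → ℝ) :
    Mop N n m D *ᵥ Γ = 0 ↔ ∃ x : Fin N → ℝ, ∀ i, D *ᵥ Function.curry Γ i = Rop N n i *ᵥ x := by
  rw [Mop_mulVec_eq_zero_iff]
  refine ⟨fun h => ⟨_, h⟩, fun ⟨x, hx⟩ => ?_⟩
  have hDG : DG N n m D *ᵥ Γ = x := by
    rw [DG_mulVec]
    simp_rw [hx]
    rw [sum_Rop_transpose_mulVec_Rop_mulVec, smul_smul, one_div,
      inv_mul_cancel₀ (by positivity), one_smul]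
  rwa [hDG]

end Dictionary

theorem SBop_mulVec_apply {n : ℕ} (v : Fin n → ℝ) (r : Fin (n - 1)) :
    (SBop n *ᵥ v) r = v ⟨r + 1, Nat.add_lt_of_lt_sub r.isLt⟩ := by
  have e (j : Fin n) : (j : ℕ) = r + 1 ↔ j = ⟨r + 1, Nat.add_lt_of_lt_sub r.isLt⟩ := by
    rw [Fin.ext_iff]
  simp [SBop, mulVec, dotProduct, ite_mul, e]

theorem STop_mulVec_apply {n : ℕ} (v : Fin n → ℝ) (r : Fin (n - 1)) :
    (STop n *ᵥ v) r = v ⟨r, r.isLt.trans_le (n.sub_le 1)⟩ := by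
  have e (j : Fin n) : (j : ℕ) = r ↔ j = ⟨r, r.isLt.trans_le (n.sub_le 1)⟩ := by
    rw [Fin.ext_iff]
  simp [STop, mulVec, dotProduct, ite_mul, e]

section Overlap

variable {N n : ℕ} [NeZero N]

theorem forall_SBop_mulVec_eq_STop_mulVec_iff (β : Fin N → Fin n → ℝ) :
    (∀ i, SBop n *ᵥ β i = STop n *ᵥ β (i + 1)) ↔
      ∀ i (r : ℕ) (hr : r + 1 < n), β i ⟨r + 1, hr⟩ = β (i + 1) ⟨r, by omega⟩ := by
  simp only [funext_iff, SBop_mulVec_apply, STop_mulVec_apply]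
  exact ⟨fun h i r hr => h i ⟨r, by omega⟩, fun h i r => h i r _⟩

theorem exists_signal_iff_overlap (hn : 0 < n) (β : Fin N → Fin n → ℝ) :
    (∃ x : Fin N → ℝ, ∀ i, β i = Rop N n i *ᵥ x) ↔
      ∀ i, SBop n *ᵥ β i = STop n *ᵥ β (i + 1) := by
  rw [forall_SBop_mulVec_eq_STop_mulVec_iff]
  constructor
  · rintro ⟨x, hx⟩ i r hr
    simp only [hx, Rop_mulVec_apply]
    congr 1
    push_cast
    ring
  · intro h
    refine ⟨fun t => β t ⟨0, hn⟩, fun i => funext fun ⟨k, hk⟩ => ?_⟩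
    rw [Rop_mulVec_apply]
    induction k generalizing i with
    | zero => simp
    | succ k ih =>
      rw [h i k hk, ih (i + 1) (by omega)]
      congr 1
      push_cast
      ring

end Overlap

theorem M_eq_zero_iff_overlap_general (n m N : ℕ) [NeZero N] (hn : 0 < n)
    (D : Matrix (Fin n) (Fin m) ℝ) (Γ : Fin N × Fin m → ℝ) :
    (Mop N n m D).mulVec Γ = 0 ↔
      ∀ i : Fin N, (SBop n).mulVec (D.mulVec fun a => Γ (i, a)) =
        (STop n).mulVec (D.mulVec fun a => Γ (i + 1, a)) := by
  rw [Mop_mulVec_eq_zero_iff_exists_signal hn]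
  exact exists_signal_iff_overlap hn fun i => D *ᵥ Function.curry Γ i

/-- `MΓ = 0` iff consecutive patches agree on their overlaps:
`S_B D αᵢ = S_T D αᵢ₊₁` for all `i` (cyclically). -/
theorem M_eq_zero_iff_overlap (n m N : ℕ) [NeZero N] (hn : 0 < n) (hnN : n ≤ N)
    (D : Matrix (Fin n) (Fin m) ℝ) (Γ : Fin N × Fin m → ℝ) :
    (Mop N n m D).mulVec Γ = 0 ↔
      ∀ i : Fin N, (SBop n).mulVec (D.mulVec fun a => Γ (i, a)) =
        (STop n).mulVec (D.mulVec fun a => Γ (i + 1, a)) :=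
  M_eq_zero_iff_overlap_general n m N hn D Γ
end
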